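/- arXiv:2304.07479 — 8 statements merged into one kernel-verified Lean document; each statement's English description precedes it below -/
import Mathlib

section
/- For every N ≥ 2 and G ∈ [0,1), the vector p^{(N,G)} defined recursively by p_1^{(1,G)}=1, p_N^{(N-1,G)}=0 and p_k^{(N,G)} = a_N(G) + b_N(G)·p_k^{(N-1,G)} with a_N(G) = (1-G)/((G(N-2)+1)·N) and b_N(G) = G(N-1)/(G(N-2)+1), is an ordered probability N-vector: its entries sum to 1 and satisfy 1 ≥ p_1^{(N,G)} ≥ p_2^{(N,G)} ≥ … ≥ p_N^{(N,G)} ≥ 0. -/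
open Finset Real Filter

/-- Coefficient a_N(G) of the Gini-stable process. -/
noncomputable def giniA (G : ℝ) (N : ℕ) : ℝ :=
  (1 - G) / ((N : ℝ) * (G * ((N : ℝ) - 2) + 1))

/-- Coefficient b_N(G) of the Gini-stable process. -/
noncomputable def giniB (G : ℝ) (N : ℕ) : ℝ :=
  G * ((N : ℝ) - 1) / (G * ((N : ℝ) - 2) + 1)

/-- Entries p_k^{(N,G)} of the Gini-stable process (1-indexed in k). -/
noncomputable def giniP (G : ℝ) : ℕ → ℕ → ℝ
  | 0, _ => 0
  | 1, k => if k = 1 then 1 else 0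
  | N + 2, k =>
      giniA G (N + 2) + giniB G (N + 2) * (if k ≤ N + 1 then giniP G (N + 1) k else 0)

/-- Harmonic number H_m = ∑_{i=1}^m 1/i, with H 0 = 0. -/
noncomputable def H (m : ℕ) : ℝ := ∑ i ∈ Finset.range m, (1 : ℝ) / (i + 1)

/-!
Being an ordered probability vector of length `N` is preserved by padding with a trailing zero,
and by the affine map `q ↦ a + b q` whenever `a, b ≥ 0` and `N a + b = 1`. The Gini coefficients
satisfy `N a_N + b_N = 1` with `a_N, b_N ≥ 0` for `G ∈ [0, 1)`, so induction on `N` gives the claim.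
-/

structure IsOrderedProbVec (n : ℕ) (p : ℕ → ℝ) : Prop where
  sum_eq_one : ∑ k ∈ Icc 1 n, p k = 1
  antitoneOn : AntitoneOn p (Icc 1 n)
  nonneg : ∀ k ∈ Icc 1 n, 0 ≤ p k

namespace IsOrderedProbVec

variable {n : ℕ} {p : ℕ → ℝ}

theorem le_one (hp : IsOrderedProbVec n p) {k : ℕ} (hk : k ∈ Icc 1 n) : p k ≤ 1 :=
  hp.sum_eq_one ▸ single_le_sum hp.nonneg hk

theorem indicator_Iic (hp : IsOrderedProbVec n p) :
    IsOrderedProbVec (n + 1) ((Set.Iic n).indicator p) := by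
  have h_eq : ∀ k ∈ Icc 1 n, (Set.Iic n).indicator p k = p k := fun k hk =>
    Set.indicator_of_mem (Set.mem_Iic.2 (mem_Icc.1 hk).2) p
  have h_top : (Set.Iic n).indicator p (n + 1) = 0 :=
    Set.indicator_of_notMem (by simp) p
  have h_nonneg : ∀ k ∈ Icc 1 (n + 1), 0 ≤ (Set.Iic n).indicator p k := fun k hk =>
    Set.indicator_apply_nonneg fun hkn => hp.nonneg k (mem_Icc.2 ⟨(mem_Icc.1 hk).1, hkn⟩)
  refine ⟨?_, ?_, h_nonneg⟩
  · rw [sum_Icc_succ_top (by omega), h_top, add_zero, sum_congr rfl h_eq, hp.sum_eq_one]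
  · intro i hi j hj hij
    rw [coe_Icc, Set.mem_Icc] at hi hj
    rcases Nat.lt_or_ge n j with hjn | hjn
    · rw [show j = n + 1 by omega, h_top]
      exact h_nonneg i (mem_Icc.2 hi)
    · have hi' : i ∈ Icc 1 n := mem_Icc.2 ⟨hi.1, hij.trans hjn⟩
      have hj' : j ∈ Icc 1 n := mem_Icc.2 ⟨hj.1, hjn⟩
      rw [h_eq i hi', h_eq j hj']
      exact hp.antitoneOn hi' hj' hij

theorem const_add_mul {a b : ℝ} (ha : 0 ≤ a) (hb : 0 ≤ b) (hab : n * a + b = 1)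
    (hp : IsOrderedProbVec n p) : IsOrderedProbVec n (fun k => a + b * p k) where
  sum_eq_one := by
    rw [sum_add_distrib, ← mul_sum, hp.sum_eq_one]
    simpa using hab
  antitoneOn _ hi _ hj hij := by
    simpa using mul_le_mul_of_nonneg_left (hp.antitoneOn hi hj hij) hb
  nonneg k hk := add_nonneg ha (mul_nonneg hb (hp.nonneg k hk))

end IsOrderedProbVec

section Coefficients

variable {G : ℝ} {N : ℕ}

theorem mul_sub_two_add_one_pos (hG0 : 0 ≤ G) (hN : 2 ≤ N) : 0 < G * ((N : ℝ) - 2) + 1 := by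
  have : (2 : ℝ) ≤ N := by exact_mod_cast hN
  nlinarith

theorem giniA_nonneg (hG0 : 0 ≤ G) (hG1 : G < 1) (hN : 2 ≤ N) : 0 ≤ giniA G N :=
  div_nonneg (by linarith) (mul_nonneg (Nat.cast_nonneg N) (mul_sub_two_add_one_pos hG0 hN).le)

theorem giniB_nonneg (hG0 : 0 ≤ G) (hN : 2 ≤ N) : 0 ≤ giniB G N := by
  have : (1 : ℝ) ≤ N := by exact_mod_cast (by omega : 1 ≤ N)
  exact div_nonneg (mul_nonneg hG0 (by linarith)) (mul_sub_two_add_one_pos hG0 hN).le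

theorem natCast_mul_giniA_add_giniB (hN : (N : ℝ) ≠ 0) (hD : G * ((N : ℝ) - 2) + 1 ≠ 0) :
    N * giniA G N + giniB G N = 1 := by
  rw [giniA, giniB]
  field_simp
  ring

end Coefficients

theorem giniP_add_two (G : ℝ) (N : ℕ) :
    giniP G (N + 2) = fun k => giniA G (N + 2) +
      giniB G (N + 2) * (Set.Iic (N + 1)).indicator (giniP G (N + 1)) k := by
  ext k
  simp [giniP, Set.indicator_apply]

theorem isOrderedProbVec_giniP {G : ℝ} (hG0 : 0 ≤ G) (hG1 : G < 1) (n : ℕ) :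
    IsOrderedProbVec (n + 1) (giniP G (n + 1)) := by
  induction n with
  | zero =>
    refine ⟨by simp [giniP], ?_, by simp [giniP]⟩
    rw [zero_add, Icc_self, coe_singleton]
    exact Set.subsingleton_singleton.antitoneOn _
  | succ n ih =>
    have hN : 2 ≤ n + 2 := by omega
    rw [giniP_add_two]
    refine ih.indicator_Iic.const_add_mul (giniA_nonneg hG0 hG1 hN) (giniB_nonneg hG0 hN) ?_
    exact_mod_cast natCast_mul_giniA_add_giniB (by positivity) (mul_sub_two_add_one_pos hG0 hN).ne'

theorem stmt0 (G : ℝ) (hG0 : 0 ≤ G) (hG1 : G < 1) (N : ℕ) (hN : 2 ≤ N) :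
    (∑ k ∈ Finset.Icc 1 N, giniP G N k = 1) ∧
    giniP G N 1 ≤ 1 ∧
    (∀ k, 1 ≤ k → k < N → giniP G N (k + 1) ≤ giniP G N k) ∧
    0 ≤ giniP G N N := by
  obtain ⟨n, rfl⟩ : ∃ n, N = n + 1 := ⟨N - 1, by omega⟩
  have hp := isOrderedProbVec_giniP hG0 hG1 n
  refine ⟨hp.sum_eq_one, hp.le_one (by simp), fun k hk1 hkN => ?_, hp.nonneg _ (by simp)⟩
  exact hp.antitoneOn (mem_Icc.2 ⟨hk1, hkN.le⟩) (mem_Icc.2 ⟨by omega, hkN⟩) (Nat.le_succ k)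
end

section
/- For G = 1/2 and every N ≥ 1 and 1 ≤ k ≤ N, the entries of the Gini-stable process satisfy p_k^{(N,1/2)} = (1/N)·∑_{i=k}^{N} 1/i = (1/N)(H_N − H_{k−1}), where H_m is the m-th harmonic number. -/
open Finset Real Filter

/-! At `G = 1/2` the coefficients are `a_N = 1/N²` and `b_N = (N-1)/N`, so the recursion reads
`N p_k^{(N)} = 1/N + (N-1) p_k^{(N-1)}`: each step from `N - 1` to `N` adds one term `1/N` to
the harmonic sum, starting from `p_k^{(k)} = 1/k²` on the diagonal. -/

lemma H_succ (m : ℕ) : H (m + 1) = H m + 1 / ((m : ℝ) + 1) := by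
  simp [H, Finset.sum_range_succ]

lemma giniP_succ_of_le (G : ℝ) {N k : ℕ} (hN : 1 ≤ N) (hk : k ≤ N) :
    giniP G (N + 1) k = giniA G (N + 1) + giniB G (N + 1) * giniP G N k := by
  obtain ⟨n, rfl⟩ := Nat.exists_eq_add_of_le' hN
  simp [giniP, hk]

lemma giniP_succ_self (G : ℝ) {N : ℕ} (hN : 1 ≤ N) :
    giniP G (N + 1) (N + 1) = giniA G (N + 1) := by
  obtain ⟨n, rfl⟩ := Nat.exists_eq_add_of_le' hN
  simp [giniP]

lemma giniA_half (N : ℕ) : giniA (1 / 2) N = 1 / (N : ℝ) ^ 2 := by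
  rw [giniA, show (N : ℝ) * (1 / 2 * ((N : ℝ) - 2) + 1) = (N : ℝ) ^ 2 / 2 by ring, div_div_eq_mul_div]
  norm_num

lemma giniB_half (N : ℕ) : giniB (1 / 2) N = ((N : ℝ) - 1) / N := by
  rw [giniB, show 1 / 2 * ((N : ℝ) - 2) + 1 = (N : ℝ) / 2 by ring, div_div_eq_mul_div]
  ring

lemma giniP_half_self {N : ℕ} (hN : 1 ≤ N) : giniP (1 / 2) N N = 1 / (N : ℝ) ^ 2 := by
  obtain ⟨n, rfl⟩ := Nat.exists_eq_add_of_le' hN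
  rcases n.eq_zero_or_pos with rfl | hn
  · simp [giniP]
  · rw [giniP_succ_self _ hn, giniA_half]

lemma H_sub_H_pred {N : ℕ} (hN : 1 ≤ N) : H N - H (N - 1) = 1 / (N : ℝ) := by
  obtain ⟨n, rfl⟩ := Nat.exists_eq_add_of_le' hN
  rw [Nat.add_sub_cancel, H_succ]
  push_cast
  ring

theorem stmt1_general (N k : ℕ) (hk1 : 1 ≤ k) (hkN : k ≤ N) :
    giniP (1/2) N k = (1 / (N : ℝ)) * (H N - H (k - 1)) := by
  induction N, hkN using Nat.le_induction with
  | base => rw [giniP_half_self hk1, H_sub_H_pred hk1]; ring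
  | succ N hkN ih =>
    have hN : (N : ℝ) ≠ 0 := by norm_cast; omega
    rw [giniP_succ_of_le _ (hk1.trans hkN) hkN, ih, giniA_half, giniB_half, H_succ]
    push_cast
    field_simp
    ring

theorem stmt1 (N k : ℕ) (hN : 1 ≤ N) (hk1 : 1 ≤ k) (hkN : k ≤ N) :
    giniP (1/2) N k = (1 / (N : ℝ)) * (H N - H (k - 1)) :=
  stmt1_general N k hk1 hkN
end

section
/- For G ∈ (0,1) with G ≠ 1/2 and every N ≥ 1 and 1 ≤ k ≤ N, the entries of the Gini-stable process satisfy p_k^{(N,G)} = (1/N)·((1−G)/(2G−1))·( Γ(N+1)·Γ(k+1/G−2) / (Γ(N−1+1/G)·Γ(k)) − 1 ). -/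
open Finset Real Filter

lemma key (G : ℝ) (hG0 : 0 < G) (hG1 : G < 1) (hG : G ≠ 1/2) (N : ℕ) :
    ∀ k : ℕ, 1 ≤ N → 1 ≤ k → k ≤ N →
    giniP G N k =
      (1 / (N : ℝ)) * ((1 - G) / (2 * G - 1)) *
        (Real.Gamma ((N : ℝ) + 1) * Real.Gamma ((k : ℝ) + 1 / G - 2) /
          (Real.Gamma ((N : ℝ) - 1 + 1 / G) * Real.Gamma (k : ℝ)) - 1) := by
  have hGne : G ≠ 0 := hG0.ne'
  have hGinv : 1 < 1/G := by rw [lt_div_iff₀ hG0]; linarith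
  have h2G : (2*G - 1 : ℝ) ≠ 0 := by intro h; apply hG; linarith
  have h2G' : (G * 2 - 1 : ℝ) ≠ 0 := by intro h; apply hG; linarith
  induction N with
  | zero => intro k h; omega
  | succ M ih =>
    intro k hN hk1 hkN
    match M, ih with
    | 0, _ =>
      have hk : k = 1 := by omega
      subst hk
      have h1 : giniP G 1 1 = 1 := by simp [giniP]
      rw [h1]
      have hg1pos : (0:ℝ) < 1/G - 1 := by linarith
      have hg1 : Real.Gamma (1/G) = (1/G - 1) * Real.Gamma (1/G - 1) := by
        have h := Real.Gamma_add_one hg1pos.ne'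
        rw [show (1/G - 1 + 1 : ℝ) = 1/G by ring] at h
        exact h
      have hGpos := Real.Gamma_pos_of_pos hg1pos
      push_cast
      rw [show (1:ℝ) + 1/G - 2 = 1/G - 1 by ring, show (1:ℝ) - 1 + 1/G = 1/G by ring, hg1,
        show (1:ℝ) + 1 = 2 by norm_num, Real.Gamma_two, Real.Gamma_one]
      set t := Real.Gamma (1/G - 1) with ht
      field_simp [hg1pos.ne', hGpos.ne']
      have h1G : (1:ℝ) - G ≠ 0 := by linarith
      field_simp [h1G, hGpos.ne']
      ring
    | (M' + 1), ih =>
      have hx0 : (0:ℝ) ≤ (M' : ℝ) := Nat.cast_nonneg _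
      have hxg : (0:ℝ) < (M':ℝ) + 1/G := by linarith
      have h3 : Real.Gamma ((M':ℝ) + 2 + 1) = ((M':ℝ) + 2) * Real.Gamma ((M':ℝ) + 2) := by
        rw [Real.Gamma_add_one (by positivity)]
      have h4 : Real.Gamma ((M':ℝ) + 2 - 1 + 1/G) = ((M':ℝ) + 1/G) * Real.Gamma ((M':ℝ) + 1/G) := by
        rw [show (M':ℝ) + 2 - 1 + 1/G = ((M':ℝ) + 1/G) + 1 by ring, Real.Gamma_add_one hxg.ne']
      have hg2 : Real.Gamma ((M':ℝ) + 2) ≠ 0 := (Real.Gamma_pos_of_pos (by positivity)).ne'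
      have hg3 : Real.Gamma ((M':ℝ) + 1/G) ≠ 0 := (Real.Gamma_pos_of_pos hxg).ne'
      have hgk : Real.Gamma ((k:ℝ)) ≠ 0 := by
        refine (Real.Gamma_pos_of_pos ?_).ne'
        exact_mod_cast Nat.cast_pos.mpr (by omega)
      have hgk2 : Real.Gamma ((k:ℝ) + 1/G - 2) ≠ 0 := by
        refine (Real.Gamma_pos_of_pos ?_).ne'
        have : (1:ℝ) ≤ (k:ℝ) := by exact_mod_cast hk1
        linarith
      have hden : G * (M':ℝ) + 1 ≠ 0 := by positivity
      show giniA G (M' + 2) + giniB G (M' + 2) * (if k ≤ M' + 1 then giniP G (M' + 1) k else 0) = _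
      unfold giniA giniB
      push_cast
      by_cases hk : k ≤ M' + 1
      · rw [if_pos hk, ih k (by omega) hk1 hk]
        push_cast
        rw [show (M':ℝ) + 1 + 1 = (M':ℝ) + 2 by ring]
        have h6 : Real.Gamma ((M':ℝ) + 1 - 1 + 1/G) = Real.Gamma ((M':ℝ) + 1/G) := by
          rw [show (M':ℝ) + 1 - 1 + 1/G = (M':ℝ) + 1/G by ring]
        have h7 : Real.Gamma ((M':ℝ) + 2) = ((M':ℝ) + 1) * Real.Gamma ((M':ℝ) + 1) := by
          rw [show (M':ℝ) + 2 = ((M':ℝ) + 1) + 1 by ring, Real.Gamma_add_one (by positivity)]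
        rw [h3, h4, h6, h7]
        have hg1 : Real.Gamma ((M':ℝ) + 1) ≠ 0 := (Real.Gamma_pos_of_pos (by positivity)).ne'
        generalize Real.Gamma ((M':ℝ) + 1/G) = A at *
        generalize Real.Gamma ((M':ℝ) + 1) = B at *
        generalize Real.Gamma ((k:ℝ) + 1/G - 2) = C at *
        generalize Real.Gamma (k:ℝ) = D at *
        rw [show (M':ℝ) + 2 - 2 = M' by ring]
        field_simp
        ring
      · rw [if_neg hk, mul_zero, add_zero]
        have hkeq : k = M' + 2 := by omega
        subst hkeq
        push_cast
        rw [show (M':ℝ) + 1 + 1 = (M':ℝ) + 2 by ring,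
          show ((M':ℝ) + 2) + 1/G - 2 = (M':ℝ) + 1/G by ring, h3, h4]
        generalize Real.Gamma ((M':ℝ) + 1/G) = A at *
        generalize Real.Gamma ((M':ℝ) + 2) = B at *
        rw [show (M':ℝ) + 2 - 2 = M' by ring]
        field_simp
        ring

theorem stmt2 (G : ℝ) (hG0 : 0 < G) (hG1 : G < 1) (hG : G ≠ 1/2)
    (N k : ℕ) (hN : 1 ≤ N) (hk1 : 1 ≤ k) (hkN : k ≤ N) :
    giniP G N k =
      (1 / (N : ℝ)) * ((1 - G) / (2 * G - 1)) *
        (Real.Gamma ((N : ℝ) + 1) * Real.Gamma ((k : ℝ) + 1 / G - 2) /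
          (Real.Gamma ((N : ℝ) - 1 + 1 / G) * Real.Gamma (k : ℝ)) - 1) := by
  exact key G hG0 hG1 hG N k hN hk1 hkN
end

section
/- For every N ≥ 2 and G ∈ [0,1), the Gini index of the vector p^{(N,G)} generated by the Gini-stable process equals exactly G, i.e., (1/(N−1))·∑_{k=1}^{N} (N − 2k + 1)·p_k^{(N,G)} = G. -/
open Finset Real Filter

lemma sum_id_real (n : ℕ) : ∑ k ∈ Finset.Icc 1 n, (k : ℝ) * 2 = (n : ℝ) * ((n : ℝ) + 1) := by
  induction n with
  | zero => simp
  | succ m ih =>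
    rw [Finset.sum_Icc_succ_top (by omega : 1 ≤ m + 1)]
    push_cast
    push_cast at ih
    linarith

lemma sum_coeff (n : ℕ) : ∑ k ∈ Finset.Icc 1 n, ((n : ℝ) - 2 * (k : ℝ) + 1) = 0 := by
  have h1 : ∀ k ∈ Finset.Icc 1 n, ((n : ℝ) - 2 * (k : ℝ) + 1) = ((n : ℝ) + 1) - (k : ℝ) * 2 := by
    intro k _; ring
  rw [Finset.sum_congr rfl h1, Finset.sum_sub_distrib, Finset.sum_const, Nat.card_Icc,
    sum_id_real]
  push_cast
  ring

lemma giniDen_ne (G : ℝ) (hG0 : 0 ≤ G) (m : ℕ) : G * (((m + 2 : ℕ) : ℝ) - 2) + 1 ≠ 0 := by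
  have : (0:ℝ) ≤ G * (m : ℝ) := mul_nonneg hG0 (Nat.cast_nonneg m)
  push_cast
  nlinarith

lemma sum_p (G : ℝ) (hG0 : 0 ≤ G) (N : ℕ) (hN : 1 ≤ N) :
    ∑ k ∈ Finset.Icc 1 N, giniP G N k = 1 := by
  induction N, hN using Nat.le_induction with
  | base => simp [giniP]
  | succ n hn ih =>
    obtain ⟨m, rfl⟩ := Nat.exists_eq_add_of_le' hn
    rw [Finset.sum_Icc_succ_top (by omega : 1 ≤ m + 1 + 1)]
    have hunf : ∀ k, giniP G (m + 2) k =
        giniA G (m + 2) + giniB G (m + 2) * (if k ≤ m + 1 then giniP G (m + 1) k else 0) := by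
      intro k; rfl
    have h1 : ∀ k ∈ Finset.Icc 1 (m + 1), giniP G (m + 1 + 1) k =
        giniA G (m + 2) + giniB G (m + 2) * giniP G (m + 1) k := by
      intro k hk
      rw [Finset.mem_Icc] at hk
      rw [show m + 1 + 1 = m + 2 from rfl, hunf, if_pos hk.2]
    rw [Finset.sum_congr rfl h1, Finset.sum_add_distrib, Finset.sum_const, Nat.card_Icc,
      ← Finset.mul_sum, ih, show m + 1 + 1 = m + 2 from rfl, hunf, if_neg (by omega)]
    have hD := giniDen_ne G hG0 m
    have hN2 : ((m + 2 : ℕ) : ℝ) ≠ 0 := by push_cast; positivity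
    simp only [giniA, giniB, nsmul_eq_mul]
    push_cast
    push_cast at hD
    field_simp
    ring

lemma main_sum (G : ℝ) (hG0 : 0 ≤ G) (N : ℕ) (hN : 1 ≤ N) :
    ∑ k ∈ Finset.Icc 1 N, ((N : ℝ) - 2 * (k : ℝ) + 1) * giniP G N k = G * ((N : ℝ) - 1) := by
  induction N, hN using Nat.le_induction with
  | base => norm_num [giniP]
  | succ n hn ih =>
    obtain ⟨m, rfl⟩ := Nat.exists_eq_add_of_le' hn
    have hunf : ∀ k, giniP G (m + 2) k =
        giniA G (m + 2) + giniB G (m + 2) * (if k ≤ m + 1 then giniP G (m + 1) k else 0) := by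
      intro k; rfl
    have h1 : ∀ k ∈ Finset.Icc 1 (m + 2),
        (((m + 1 + 1 : ℕ) : ℝ) - 2 * (k : ℝ) + 1) * giniP G (m + 1 + 1) k =
        (((m + 2 : ℕ) : ℝ) - 2 * (k : ℝ) + 1) * giniA G (m + 2)
        + giniB G (m + 2) * ((((m + 2 : ℕ) : ℝ) - 2 * (k : ℝ) + 1)
            * (if k ≤ m + 1 then giniP G (m + 1) k else 0)) := by
      intro k _
      rw [show m + 1 + 1 = m + 2 from rfl, hunf]
      ring
    rw [show ((m + 1 + 1 : ℕ) : ℝ) = ((m + 2 : ℕ) : ℝ) from rfl] at *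
    rw [Finset.sum_congr rfl h1, Finset.sum_add_distrib, ← Finset.sum_mul, sum_coeff,
      ← Finset.mul_sum]
    rw [Finset.sum_Icc_succ_top (by omega : 1 ≤ m + 1 + 1), if_neg (by omega), mul_zero,
      add_zero]
    have h2 : ∀ k ∈ Finset.Icc 1 (m + 1),
        (((m + 2 : ℕ) : ℝ) - 2 * (k : ℝ) + 1) * (if k ≤ m + 1 then giniP G (m + 1) k else 0)
        = (((m + 1 : ℕ) : ℝ) - 2 * (k : ℝ) + 1) * giniP G (m + 1) k + giniP G (m + 1) k := by
      intro k hk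
      rw [Finset.mem_Icc] at hk
      rw [if_pos hk.2]
      push_cast
      ring
    rw [Finset.sum_congr rfl h2, Finset.sum_add_distrib, ih, sum_p G hG0 (m + 1) (by omega)]
    have hD := giniDen_ne G hG0 m
    simp only [giniB]
    push_cast
    push_cast at hD
    field_simp
    ring

theorem stmt3 (G : ℝ) (hG0 : 0 ≤ G) (hG1 : G < 1) (N : ℕ) (hN : 2 ≤ N) :
    (1 / ((N : ℝ) - 1)) *
      ∑ k ∈ Finset.Icc 1 N, ((N : ℝ) - 2 * (k : ℝ) + 1) * giniP G N k = G := by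
  rw [main_sum G hG0 N (by omega)]
  have hN1 : ((N : ℝ) - 1) ≠ 0 := by
    have : (2 : ℝ) ≤ (N : ℝ) := by exact_mod_cast hN
    nlinarith
  field_simp
end

section
/- Let N ≥ 3 and G ∈ [0,1), and let q^{(N-1)} be any ordered probability (N−1)-vector with Gini index G. If the N-vector q^{(N)} defined by q_k^{(N)} = a + b·q_k^{(N-1)} (with q_N^{(N-1)} := 0) is a probability vector with Gini index G, then necessarily b = G(N−1)/(G(N−2)+1) and a = (1−G)/(N·(G(N−2)+1)). Conversely, these values of a, b always yield a probability vector with Gini index G. -/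
/-!
Write `n = N - 1`. Since the weights `n - 2k + 1` of the Gini sum are centred (they sum to zero
over `k = 1, …, n`), the constant part `a` of the update drops out of the Gini sum of `q^{(N)}`,
and passing from the weights `n - 2k + 1` to `(n + 1) - 2k + 1` adds `∑ q_k = 1`. Hence the two
conditions on `q^{(N)}` become the linear system `N a + b = 1`, `b (G (N - 2) + 1) = G (N - 1)`,
whose unique solution is the stated pair.
-/

open Finset Real Filter

theorem sum_Icc_centred_weight (n : ℕ) : ∑ k ∈ Icc 1 n, ((n : ℝ) - 2 * k + 1) = 0 := by
  induction n with
  | zero => simp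
  | succ n ih =>
    calc ∑ k ∈ Icc 1 (n + 1), (((n + 1 : ℕ) : ℝ) - 2 * k + 1)
        = ∑ k ∈ Icc 1 n, (((n : ℝ) - 2 * k + 1) + 1) - n := by
          rw [sum_Icc_succ_top (by omega)]
          push_cast
          ring_nf
      _ = 0 := by
          rw [sum_add_distrib, ih, sum_const, Nat.card_Icc]
          simp

theorem sum_Icc_mul_affine_extend (n : ℕ) (w q : ℕ → ℝ) (a b : ℝ) :
    ∑ k ∈ Icc 1 (n + 1), w k * (a + b * if k ≤ n then q k else 0)
      = a * ∑ k ∈ Icc 1 (n + 1), w k + b * ∑ k ∈ Icc 1 n, w k * q k := by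
  have hext : ∑ k ∈ Icc 1 (n + 1), w k * (if k ≤ n then q k else 0)
      = ∑ k ∈ Icc 1 n, w k * q k := by
    rw [sum_Icc_succ_top (by omega), if_neg (by omega), mul_zero, add_zero]
    exact sum_congr rfl fun k hk => by rw [if_pos (mem_Icc.mp hk).2]
  simp only [mul_add, sum_add_distrib, ← sum_mul, mul_left_comm _ b, ← mul_sum, hext]
  ring

theorem sum_Icc_affine_extend (n : ℕ) (q : ℕ → ℝ) (a b : ℝ) :
    ∑ k ∈ Icc 1 (n + 1), (a + b * if k ≤ n then q k else 0)
      = (n + 1) * a + b * ∑ k ∈ Icc 1 n, q k := by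
  simpa [mul_comm] using sum_Icc_mul_affine_extend n 1 q a b

theorem sum_Icc_centred_mul_affine_extend (n : ℕ) (q : ℕ → ℝ) (a b : ℝ) :
    ∑ k ∈ Icc 1 (n + 1), (((n : ℝ) + 1) - 2 * k + 1) * (a + b * if k ≤ n then q k else 0)
      = b * (∑ k ∈ Icc 1 n, ((n : ℝ) - 2 * k + 1) * q k + ∑ k ∈ Icc 1 n, q k) := by
  have hcentred := sum_Icc_centred_weight (n + 1)
  push_cast at hcentred
  rw [sum_Icc_mul_affine_extend, hcentred, ← sum_add_distrib]
  simp only [add_mul, one_mul, mul_zero, zero_add]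
  congr 1
  exact sum_congr rfl fun k _ => by ring

theorem affine_gini_system_iff {N G a b : ℝ} (hN : N ≠ 0) (hD : G * (N - 2) + 1 ≠ 0) :
    (N * a + b = 1 ∧ b * (G * (N - 2) + 1) = G * (N - 1)) ↔
      (b = G * (N - 1) / (G * (N - 2) + 1) ∧ a = (1 - G) / (N * (G * (N - 2) + 1))) := by
  rw [eq_div_iff hD, eq_div_iff (mul_ne_zero hN hD)]
  constructor
  · rintro ⟨h1, h2⟩
    exact ⟨h2, by linear_combination (G * (N - 2) + 1) * h1 - h2⟩
  · rintro ⟨h1, h2⟩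
    refine ⟨mul_left_cancel₀ hD ?_, h1⟩
    linear_combination h2 + h1

theorem stmt4_general (N : ℕ) (hN : 3 ≤ N) (G : ℝ) (hG0 : 0 ≤ G)
    (q : ℕ → ℝ)
    (hsum : ∑ k ∈ Finset.Icc 1 (N - 1), q k = 1)
    (hGini : (1 / ((N : ℝ) - 2)) *
      ∑ k ∈ Finset.Icc 1 (N - 1), (((N : ℝ) - 1) - 2 * (k : ℝ) + 1) * q k = G)
    (a b : ℝ) :
    ((∑ k ∈ Finset.Icc 1 N, (a + b * (if k ≤ N - 1 then q k else 0)) = 1 ∧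
      (1 / ((N : ℝ) - 1)) *
        ∑ k ∈ Finset.Icc 1 N,
          ((N : ℝ) - 2 * (k : ℝ) + 1) * (a + b * (if k ≤ N - 1 then q k else 0)) = G)
      ↔
     (b = G * ((N : ℝ) - 1) / (G * ((N : ℝ) - 2) + 1) ∧
      a = (1 - G) / ((N : ℝ) * (G * ((N : ℝ) - 2) + 1)))) := by
  obtain ⟨n, rfl⟩ : ∃ n, N = n + 1 := ⟨N - 1, by omega⟩
  have hn : (2 : ℝ) ≤ n := by exact_mod_cast (by omega : 2 ≤ n)
  simp only [Nat.add_sub_cancel, Nat.cast_add, Nat.cast_one] at hsum hGini ⊢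
  have hweighted : ∑ k ∈ Icc 1 n, ((n : ℝ) - 2 * k + 1) * q k = G * (n + 1 - 2) := by
    have hpos : (n : ℝ) + 1 - 2 ≠ 0 := by linarith
    rw [← hGini, add_sub_cancel_right, one_div_mul_eq_div, div_mul_cancel₀ _ hpos]
  rw [sum_Icc_affine_extend, sum_Icc_centred_mul_affine_extend, hweighted, hsum,
    ← affine_gini_system_iff (by positivity) (by nlinarith)]
  rw [mul_one, one_div_mul_eq_div, div_eq_iff (by linarith)]

theorem stmt4 (N : ℕ) (hN : 3 ≤ N) (G : ℝ) (hG0 : 0 ≤ G) (hG1 : G < 1)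
    (q : ℕ → ℝ)
    (hord : ∀ k, 1 ≤ k → k < N - 1 → q (k + 1) ≤ q k)
    (hnonneg : ∀ k, 1 ≤ k → k ≤ N - 1 → 0 ≤ q k)
    (hsum : ∑ k ∈ Finset.Icc 1 (N - 1), q k = 1)
    (hGini : (1 / ((N : ℝ) - 2)) *
      ∑ k ∈ Finset.Icc 1 (N - 1), (((N : ℝ) - 1) - 2 * (k : ℝ) + 1) * q k = G)
    (a b : ℝ) :
    ((∑ k ∈ Finset.Icc 1 N, (a + b * (if k ≤ N - 1 then q k else 0)) = 1 ∧
      (1 / ((N : ℝ) - 1)) *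
        ∑ k ∈ Finset.Icc 1 N,
          ((N : ℝ) - 2 * (k : ℝ) + 1) * (a + b * (if k ≤ N - 1 then q k else 0)) = G)
      ↔
     (b = G * ((N : ℝ) - 1) / (G * ((N : ℝ) - 2) + 1) ∧
      a = (1 - G) / ((N : ℝ) * (G * ((N : ℝ) - 2) + 1)))) :=
  stmt4_general N hN G hG0 q hsum hGini a b
end

section
/- In the affine uniqueness setting: if q^{(N-1)} is an ordered probability (N−1)-vector with Gini index G and q_k^{(N)} = a + b·q_k^{(N-1)} (with q_N^{(N-1)} := 0), then the Gini index of q^{(N)} equals b·((N−2)·G + 1)/(N−1). -/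
open Finset Real Filter

/-! The Gini weights m - 2k + 1 (k = 1, …, m) sum to zero, so the constant shift `a` drops out.
The weights of length N exceed those of length N - 1 by one at each k < N, which turns the
weighted sum into (N - 2)·G + ∑ q = (N - 2)·G + 1. -/

lemma sum_Icc_giniWeight (m : ℕ) : ∑ k ∈ Icc 1 m, ((m : ℝ) - 2 * k + 1) = 0 := by
  induction m with
  | zero => simp
  | succ m ih =>
    have hshift : ∀ k ∈ Icc 1 m, ((m + 1 : ℕ) : ℝ) - 2 * k + 1 = ((m : ℝ) - 2 * k + 1) + 1 := by
      intros; push_cast; ring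
    rw [sum_Icc_succ_top (by omega), sum_congr rfl hshift, sum_add_distrib, ih, sum_const,
      Nat.card_Icc]
    push_cast; ring

lemma sum_Icc_giniWeight_mul_affine_extend (m : ℕ) (a b : ℝ) (q : ℕ → ℝ) :
    ∑ k ∈ Icc 1 (m + 1), (((m + 1 : ℕ) : ℝ) - 2 * k + 1) * (a + b * if k ≤ m then q k else 0) =
      b * (∑ k ∈ Icc 1 m, ((m : ℝ) - 2 * k + 1) * q k + ∑ k ∈ Icc 1 m, q k) := by
  have hsplit : ∀ k ∈ Icc 1 (m + 1),
      (((m + 1 : ℕ) : ℝ) - 2 * k + 1) * (a + b * if k ≤ m then q k else 0) =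
        a * (((m + 1 : ℕ) : ℝ) - 2 * k + 1) +
          b * (if k ≤ m then (((m : ℝ) - 2 * k + 1) * q k + q k) else 0) := by
    intro k _
    split_ifs <;> push_cast <;> ring
  rw [sum_congr rfl hsplit, sum_add_distrib, ← mul_sum, ← mul_sum, sum_Icc_giniWeight,
    sum_Icc_succ_top (by omega), if_neg (by omega), sum_ite_of_true, sum_add_distrib]
  · ring
  · intro k hk; exact (mem_Icc.mp hk).2

theorem stmt5_general (N : ℕ) (hN : 3 ≤ N) (G a b : ℝ) (q : ℕ → ℝ)
    (hsum : ∑ k ∈ Finset.Icc 1 (N - 1), q k = 1)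
    (hGini : (1 / ((N : ℝ) - 2)) *
      ∑ k ∈ Finset.Icc 1 (N - 1), (((N : ℝ) - 1) - 2 * (k : ℝ) + 1) * q k = G) :
    (1 / ((N : ℝ) - 1)) *
      ∑ k ∈ Finset.Icc 1 N,
        ((N : ℝ) - 2 * (k : ℝ) + 1) * (a + b * (if k ≤ N - 1 then q k else 0)) =
      b * (((N : ℝ) - 2) * G + 1) / ((N : ℝ) - 1) := by
  obtain ⟨m, rfl⟩ : ∃ m, N = m + 1 := ⟨N - 1, by omega⟩
  rw [Nat.add_sub_cancel] at hsum hGini ⊢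
  have hweighted : ∑ k ∈ Icc 1 m, ((m : ℝ) - 2 * k + 1) * q k = (m - 1) * G := by
    have hm1 : (m : ℝ) - 1 ≠ 0 := sub_ne_zero.mpr (by norm_cast; omega)
    rw [← hGini]
    push_cast
    rw [show (m : ℝ) + 1 - 2 = m - 1 by ring]
    simp only [add_sub_cancel_right]
    field_simp
  rw [sum_Icc_giniWeight_mul_affine_extend, hweighted, hsum]
  push_cast
  ring

theorem stmt5 (N : ℕ) (hN : 3 ≤ N) (G a b : ℝ) (q : ℕ → ℝ)
    (hord : ∀ k, 1 ≤ k → k < N - 1 → q (k + 1) ≤ q k)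
    (hnonneg : ∀ k, 1 ≤ k → k ≤ N - 1 → 0 ≤ q k)
    (hsum : ∑ k ∈ Finset.Icc 1 (N - 1), q k = 1)
    (hGini : (1 / ((N : ℝ) - 2)) *
      ∑ k ∈ Finset.Icc 1 (N - 1), (((N : ℝ) - 1) - 2 * (k : ℝ) + 1) * q k = G) :
    (1 / ((N : ℝ) - 1)) *
      ∑ k ∈ Finset.Icc 1 N,
        ((N : ℝ) - 2 * (k : ℝ) + 1) * (a + b * (if k ≤ N - 1 then q k else 0)) =
      b * (((N : ℝ) - 2) * G + 1) / ((N : ℝ) - 1) :=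
  stmt5_general N hN G a b q hsum hGini
end

section
/- For G ∈ (0,1), G ≠ 1/2, and 1 ≤ k ≤ N, the cumulative sums of the Gini-stable process satisfy F_k^{(N,G)} = ((1−G)/(2G−1))·( (G/(1−G))·Γ(N)·Γ(k−1+1/G)/(Γ(N−1+1/G)·Γ(k)) − k/N ). -/
open Finset Real Filter

/-- At `k = N` the right-hand side equals `1`. -/
lemma gini_rhs_one (G : ℝ) (hG0 : 0 < G) (hG1 : G < 1) (hG : G ≠ 1/2)
    (m : ℕ) (hm : 1 ≤ m) :
    ((1 - G) / (2 * G - 1)) *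
        ((G / (1 - G)) *
          (Real.Gamma (m : ℝ) * Real.Gamma ((m : ℝ) - 1 + 1 / G) /
            (Real.Gamma ((m : ℝ) - 1 + 1 / G) * Real.Gamma (m : ℝ)))
          - (m : ℝ) / (m : ℝ)) = 1 := by
  have h1G : (1:ℝ) - G ≠ 0 := by linarith
  have h2G : 2*G - 1 ≠ 0 := by intro h; apply hG; linarith
  have h2G' : G*2 - 1 ≠ 0 := by intro h; apply hG; linarith
  have hm' : (1:ℝ) ≤ (m:ℝ) := by exact_mod_cast hm
  have hinv : (0:ℝ) < 1/G := by positivity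
  have hΓ1 : Real.Gamma (m:ℝ) ≠ 0 := ne_of_gt (Real.Gamma_pos_of_pos (by linarith))
  have hΓ2 : Real.Gamma ((m:ℝ) - 1 + 1/G) ≠ 0 :=
    ne_of_gt (Real.Gamma_pos_of_pos (by linarith))
  have hmne : (m:ℝ) ≠ 0 := by positivity
  rw [div_self hmne, show Real.Gamma (m:ℝ) * Real.Gamma ((m:ℝ) - 1 + 1/G) /
      (Real.Gamma ((m:ℝ) - 1 + 1/G) * Real.Gamma (m:ℝ)) = 1 by
    rw [mul_comm (Real.Gamma ((m:ℝ) - 1 + 1/G))]; exact div_self (by positivity)]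
  field_simp
  ring

lemma gini_aux (G : ℝ) (hG0 : 0 < G) (hG1 : G < 1) (hG : G ≠ 1/2) :
    ∀ n k, 1 ≤ k → k ≤ n + 1 →
    ∑ i ∈ Finset.Icc 1 k, giniP G (n+1) i =
      ((1 - G) / (2 * G - 1)) *
        ((G / (1 - G)) *
          (Real.Gamma ((n+1 : ℕ) : ℝ) * Real.Gamma ((k : ℝ) - 1 + 1 / G) /
            (Real.Gamma (((n+1 : ℕ) : ℝ) - 1 + 1 / G) * Real.Gamma (k : ℝ)))
          - (k : ℝ) / ((n+1 : ℕ) : ℝ)) := by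
  have h1G : (1:ℝ) - G ≠ 0 := by linarith
  have h2G : 2*G - 1 ≠ 0 := by intro h; apply hG; linarith
  have h2G' : G*2 - 1 ≠ 0 := by intro h; apply hG; linarith
  have hGne : G ≠ 0 := ne_of_gt hG0
  have hinv : (0:ℝ) < 1/G := by positivity
  intro n
  induction n with
  | zero =>
    intro k hk1 hk2
    interval_cases k
    simp [giniP]
    have hg : Real.Gamma G⁻¹ ≠ 0 := ne_of_gt (Real.Gamma_pos_of_pos (by positivity))
    rw [div_self hg]
    field_simp
    ring
  | succ n ih =>
    intro k hk1 hk2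
    -- common facts
    have hk' : (1:ℝ) ≤ (k:ℝ) := by exact_mod_cast hk1
    have hΓk : Real.Gamma (k:ℝ) ≠ 0 := ne_of_gt (Real.Gamma_pos_of_pos (by linarith))
    have hΓk2 : Real.Gamma ((k:ℝ) - 1 + 1/G) ≠ 0 :=
      ne_of_gt (Real.Gamma_pos_of_pos (by linarith))
    have hΓn : Real.Gamma ((n:ℝ)+1) ≠ 0 :=
      ne_of_gt (Real.Gamma_pos_of_pos (by positivity))
    have hΓn2 : Real.Gamma ((n:ℝ)+1/G) ≠ 0 :=
      ne_of_gt (Real.Gamma_pos_of_pos (by positivity))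
    have hg1 : Real.Gamma ((n:ℝ)+2) = ((n:ℝ)+1) * Real.Gamma ((n:ℝ)+1) := by
      rw [show (n:ℝ)+2 = ((n:ℝ)+1)+1 by ring, Real.Gamma_add_one (by positivity)]
    have hg2 : Real.Gamma ((n:ℝ)+2-1+1/G) = ((n:ℝ)+1/G) * Real.Gamma ((n:ℝ)+1/G) := by
      rw [show (n:ℝ)+2-1+1/G = ((n:ℝ)+1/G)+1 by ring,
        Real.Gamma_add_one (ne_of_gt (by positivity))]
    have hg3 : (n:ℝ)+1-1+1/G = (n:ℝ)+1/G := by ring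
    have hd : G * ((n:ℝ) + 2 - 2) + 1 ≠ 0 := by
      rw [show G * ((n:ℝ) + 2 - 2) + 1 = G * (n:ℝ) + 1 by ring]; positivity
    have hd2 : (n:ℝ) + 1/G ≠ 0 := ne_of_gt (by positivity)
    have hn1 : (n:ℝ) + 1 ≠ 0 := by positivity
    have hn2 : (n:ℝ) + 2 ≠ 0 := by positivity
    rcases Nat.lt_or_ge k (n+2) with hlt | hge
    · -- k ≤ n + 1
      have hkn : k ≤ n + 1 := by omega
      have hsum : ∑ i ∈ Finset.Icc 1 k, giniP G (n+1+1) i =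
          k * giniA G (n+2) + giniB G (n+2) * ∑ i ∈ Finset.Icc 1 k, giniP G (n+1) i := by
        have : ∀ i ∈ Finset.Icc 1 k, giniP G (n+1+1) i
            = giniA G (n+2) + giniB G (n+2) * giniP G (n+1) i := by
          intro i hi
          simp only [Finset.mem_Icc] at hi
          simp [giniP, show i ≤ n+1 by omega]
        rw [Finset.sum_congr rfl this, Finset.sum_add_distrib, Finset.sum_const,
          ← Finset.mul_sum, Nat.card_Icc]
        simp
      rw [hsum, ih k hk1 hkn]
      unfold giniA giniB
      push_cast
      rw [show (n:ℝ)+1+1-1+1/G = (n:ℝ)+2-1+1/G by ring,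
        show (n:ℝ)+1+1 = (n:ℝ)+2 by ring, hg1, hg2, hg3]
      field_simp
      ring
    · -- k = n + 2
      have hkeq : k = n + 2 := by omega
      subst hkeq
      have hsum : ∑ i ∈ Finset.Icc 1 (n+2), giniP G (n+1+1) i =
          ((n:ℝ)+2) * giniA G (n+2) + giniB G (n+2) *
            ∑ i ∈ Finset.Icc 1 (n+1), giniP G (n+1) i := by
        rw [show n+2 = (n+1)+1 from rfl, Finset.sum_Icc_succ_top (by omega)]
        have h1 : ∀ i ∈ Finset.Icc 1 (n+1), giniP G (n+1+1) i
            = giniA G (n+2) + giniB G (n+2) * giniP G (n+1) i := by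
          intro i hi
          simp only [Finset.mem_Icc] at hi
          simp [giniP, show i ≤ n+1 by omega]
        have h2 : giniP G (n+1+1) (n+1+1) = giniA G (n+2) := by
          simp [giniP]
        rw [Finset.sum_congr rfl h1, h2, Finset.sum_add_distrib, Finset.sum_const,
          ← Finset.mul_sum, Nat.card_Icc]
        simp
        ring
      rw [hsum, ih (n+1) (by omega) (le_refl _),
        gini_rhs_one G hG0 hG1 hG (n+1) (by omega),
        gini_rhs_one G hG0 hG1 hG (n+2) (by omega)]
      unfold giniA giniB
      push_cast
      field_simp
      ring

theorem stmt8 (G : ℝ) (hG0 : 0 < G) (hG1 : G < 1) (hG : G ≠ 1/2)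
    (N k : ℕ) (hk1 : 1 ≤ k) (hkN : k ≤ N) :
    ∑ i ∈ Finset.Icc 1 k, giniP G N i =
      ((1 - G) / (2 * G - 1)) *
        ((G / (1 - G)) *
          (Real.Gamma (N : ℝ) * Real.Gamma ((k : ℝ) - 1 + 1 / G) /
            (Real.Gamma ((N : ℝ) - 1 + 1 / G) * Real.Gamma (k : ℝ)))
          - (k : ℝ) / (N : ℝ)) := by
  obtain ⟨n, rfl⟩ : ∃ n, N = n + 1 := ⟨N - 1, by omega⟩
  exact gini_aux G hG0 hG1 hG n k hk1 hkN
end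

section
/- For G ∈ (0,1) with G ≠ 1/2, as N → ∞ the Bonferroni index 𝓑(p^{(N,G)}) = (N/(N−1))·∑_{k=2}^{N} 1/(k(k+1/G−2)) converges to (G/(2G−1))·(1 − H_{1/G−1}), where H_x = ψ(x+1) + γ is the generalized harmonic number expressed via the digamma function ψ and Euler's constant γ. -/
open Finset Real Filter

/-- Generalized harmonic number H_c = ψ(c+1) + γ, expressed through the classical
partial-fraction identity H_c = ∑_{k=1}^∞ (1/k − 1/(k+c)). -/
noncomputable def Hgen (c : ℝ) : ℝ := ∑' k : ℕ, ((1 : ℝ) / (k + 1) - 1 / ((k : ℝ) + 1 + c))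

/-! Partial fractions give `1 / ((k + 2) (k + 1 + x)) = (1 / (k + 2) - 1 / (k + 1 + x)) / (x - 1)`,
and the bracket is the `k`-th term of the series defining `Hgen x` minus the telescoping term
`1 / (k + 1) - 1 / (k + 2)`, whose series sums to `1`. With `x = 1 / G - 1` this evaluates the
series of the Bonferroni index, while the prefactor `N / (N - 1)` tends to `1`. -/

open Topology

theorem hasSum_one_div_add_one_sub_one_div_add_two :
    HasSum (fun k : ℕ => 1 / ((k : ℝ) + 1) - 1 / ((k : ℝ) + 2)) 1 := by
  have hnonneg (k : ℕ) : 0 ≤ 1 / ((k : ℝ) + 1) - 1 / ((k : ℝ) + 2) :=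
    sub_nonneg.2 (one_div_le_one_div_of_le (by positivity) (by linarith))
  rw [hasSum_iff_tendsto_nat_of_nonneg hnonneg]
  have hpartial (n : ℕ) :
      ∑ k ∈ range n, (1 / ((k : ℝ) + 1) - 1 / ((k : ℝ) + 2)) = 1 - 1 / ((n : ℝ) + 1) := by
    have := sum_range_sub' (fun k : ℕ => 1 / ((k : ℝ) + 1)) n
    push_cast at this
    simpa [add_assoc, one_add_one_eq_two] using this
  simp_rw [hpartial]
  simpa using tendsto_const_nhds.sub (tendsto_one_div_add_atTop_nhds_zero_nat (𝕜 := ℝ))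

theorem hasSum_Hgen {x : ℝ} (hx : 0 ≤ x) :
    HasSum (fun k : ℕ => 1 / ((k : ℝ) + 1) - 1 / ((k : ℝ) + 1 + x)) (Hgen x) := by
  refine Summable.hasSum (Summable.of_nonneg_of_le (f := fun k : ℕ => x / ((k : ℝ) + 1) ^ 2)
    (fun k => ?_) (fun k => ?_) ?_)
  · exact sub_nonneg.2 (one_div_le_one_div_of_le (by positivity) (by linarith))
  · have hk : (0 : ℝ) < k + 1 := by positivity
    calc 1 / ((k : ℝ) + 1) - 1 / ((k : ℝ) + 1 + x)
          = x / (((k : ℝ) + 1) * ((k : ℝ) + 1 + x)) := by field_simp; ring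
      _ ≤ x / ((k : ℝ) + 1) ^ 2 := by
          rw [sq]
          exact div_le_div_of_nonneg_left hx (by positivity)
            (mul_le_mul_of_nonneg_left (le_add_of_nonneg_right hx) hk.le)
  · have h := ((summable_nat_add_iff 1).2 (Real.summable_nat_pow_inv.2 one_lt_two)).mul_left x
    refine h.congr fun k => ?_
    push_cast
    rfl

theorem hasSum_one_div_add_two_mul_add_one_add {x : ℝ} (hx0 : 0 ≤ x) (hx1 : x ≠ 1) :
    HasSum (fun k : ℕ => 1 / (((k : ℝ) + 2) * ((k : ℝ) + 1 + x))) ((Hgen x - 1) / (x - 1)) := by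
  have hx1' : x - 1 ≠ 0 := sub_ne_zero.2 hx1
  have hterm : (fun k : ℕ => 1 / (((k : ℝ) + 2) * ((k : ℝ) + 1 + x))) = fun k : ℕ =>
      (1 / ((k : ℝ) + 1) - 1 / ((k : ℝ) + 1 + x) - (1 / ((k : ℝ) + 1) - 1 / ((k : ℝ) + 2))) /
        (x - 1) := by
    funext k
    have : (k : ℝ) + 1 + x ≠ 0 := by positivity
    field_simp
    ring
  rw [hterm]
  exact ((hasSum_Hgen hx0).sub hasSum_one_div_add_one_sub_one_div_add_two).div_const _

theorem tendsto_sum_Icc_of_hasSum {M : Type*} [AddCommMonoid M] [TopologicalSpace M]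
    {f : ℕ → M} {a : M} (m : ℕ) (h : HasSum (fun k => f (k + m)) a) :
    Tendsto (fun N => ∑ k ∈ Icc m N, f k) atTop (𝓝 a) := by
  have hcount : Tendsto (fun N => N + 1 - m) atTop atTop :=
    (tendsto_sub_atTop_nat m).comp (tendsto_add_atTop_nat 1)
  refine (h.tendsto_sum_nat.comp hcount).congr fun N => ?_
  simp [← Ico_add_one_right_eq_Icc, sum_Ico_eq_sum_range, add_comm]

theorem stmt13 (G : ℝ) (hG0 : 0 < G) (hG1 : G < 1) (hG : G ≠ 1/2) :
    Filter.Tendsto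
      (fun N : ℕ => ((N : ℝ) / ((N : ℝ) - 1)) *
        ∑ k ∈ Finset.Icc 2 N, (1 : ℝ) / ((k : ℝ) * ((k : ℝ) + 1 / G - 2)))
      Filter.atTop (nhds ((G / (2 * G - 1)) * (1 - Hgen (1 / G - 1)))) := by
  have hx0 : 0 ≤ 1 / G - 1 := by rw [sub_nonneg, le_one_div one_pos hG0]; linarith
  have hx1 : 1 / G - 1 ≠ 1 := by
    intro h; apply hG; field_simp at h; linarith
  have hsum : HasSum (fun k : ℕ => 1 / (((k + 2 : ℕ) : ℝ) * (((k + 2 : ℕ) : ℝ) + 1 / G - 2)))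
      ((Hgen (1 / G - 1) - 1) / (1 / G - 1 - 1)) := by
    convert hasSum_one_div_add_two_mul_add_one_add hx0 hx1 using 4 with k <;> push_cast <;> ring
  have hprefactor : Tendsto (fun N : ℕ => (N : ℝ) / ((N : ℝ) - 1)) atTop (𝓝 1) := by
    simpa [← sub_eq_add_neg] using tendsto_natCast_div_add_atTop (-1 : ℝ)
  have hlim := hprefactor.mul
    (tendsto_sum_Icc_of_hasSum (f := fun k : ℕ => 1 / ((k : ℝ) * ((k : ℝ) + 1 / G - 2))) 2 hsum)
  convert hlim using 2
  generalize Hgen (1 / G - 1) = s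
  have hden : 1 / G - 1 - 1 = -((2 * G - 1) / G) := by field_simp; ring
  rw [hden, one_mul, div_neg, div_div_eq_mul_div]
  ring
end
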